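/- Let p = 29789 and π = 110 + 133i in the Gaussian integers ℤ[i], so that p = π·π̄ where π̄ = 110 - 133i. Then π^(p-1) ≡ 1 mod π̄², i.e., π̄² divides π^(p-1) - 1 in ℤ[i]. -/

import Mathlib

/-!
Since `π̄` has residue degree one, `ℤ[i]/(π̄²) ≅ ℤ/p²`, so `π` is congruent modulo `π̄²` to a
rational integer `a`, and the claim reduces to the Wieferich-type congruence
`a^(p-1) ≡ 1 (mod p²)`, which is a finite computation in `ZMod (p²)`.
-/

theorem dvd_pow_sub_one_of_dvd_sub {R : Type*} [CommRing R] {d z a : R} (k : ℕ)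
    (hza : d ∣ z - a) (ha : d ∣ a ^ k - 1) : d ∣ z ^ k - 1 := by
  have hzk : d ∣ z ^ k - a ^ k := hza.trans (sub_dvd_pow_sub_pow z a k)
  simpa using dvd_add hzk ha

theorem dvd_pow_sub_one_of_zmod_pow_eq_one {R : Type*} [CommRing R] {d z : R} {n k : ℕ} {a : ℤ}
    (hn : d ∣ (n : R)) (hza : d ∣ z - a) (ha : (a : ZMod n) ^ k = 1) : d ∣ z ^ k - 1 := by
  have hint : (n : ℤ) ∣ a ^ k - 1 :=
    (ZMod.intCast_eq_intCast_iff_dvd_sub 1 (a ^ k) n).mp (by push_cast; exact ha.symm)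
  have hcast : ((n : ℤ) : R) ∣ ((a ^ k - 1 : ℤ) : R) := Int.cast_dvd_cast _ _ hint
  push_cast at hcast
  exact dvd_pow_sub_one_of_dvd_sub k hza (hn.trans hcast)

/-- Let `p = 29789` and `π = 110 + 133i` in the Gaussian integers `ℤ[i]`, so that
`p = π·π̄` where `π̄ = 110 - 133i`.  Then `π^(p-1) ≡ 1 mod π̄²`, i.e. `π̄²` divides
`π^(p-1) - 1` in `ℤ[i]`. -/
theorem gaussian_counterexample :
    (⟨110, 133⟩ : GaussianInt) * ⟨110, -133⟩ = (29789 : GaussianInt) ∧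
    ((⟨110, -133⟩ : GaussianInt) ^ 2 ∣ (⟨110, 133⟩ : GaussianInt) ^ (29789 - 1) - 1) := by
  set π : GaussianInt := ⟨110, 133⟩
  set πbar : GaussianInt := ⟨110, -133⟩
  have hsplit : π * πbar = 29789 := by decide
  refine ⟨hsplit, ?_⟩
  have hp2 : πbar ^ 2 ∣ ((29789 ^ 2 : ℕ) : GaussianInt) :=
    ⟨π ^ 2, by rw [Nat.cast_pow, Nat.cast_ofNat, ← hsplit]; ring⟩
  -- `358987459 = 110 + 133 j mod p²`, where `j = 2699153` is the square root of `-1` mod `p²`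
  -- with `i ≡ j (mod π̄²)`.
  have hπ : πbar ^ 2 ∣ π - (358987459 : ℤ) := ⟨⟨2261, -11837⟩, by decide⟩
  have hfermat : ((358987459 : ℤ) : ZMod (29789 ^ 2)) ^ (29789 - 1) = 1 := by reduce_mod_char
  exact dvd_pow_sub_one_of_zmod_pow_eq_one hp2 hπ hfermat
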